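/- arXiv:0905.3405 — 3 statements merged into one kernel-verified Lean document; each statement's English description precedes it below -/
import Mathlib

section
/- Let ψ be convex and finite on [0, q(1+ε₀)] for some ε₀ > 0 with ψ(0) = ψ(1) = 0, and define ψ^{(q)}(r) = ψ(qr) − r ψ(q). Then for each fixed ε > 0 (with all quantities finite), the map q ↦ ψ^{(q)}(1+ε) is nondecreasing in q on (0,∞). -/
/-- For a convex function `ψ` on `[0,∞)` with `ψ 0 = ψ 1 = 0`, and a fixed `ε > 0`,
the map `q ↦ ψ^{(q)}(1+ε) = ψ (q*(1+ε)) - (1+ε) * ψ q` is nondecreasing on `(0,∞)`. -/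
theorem psi_q_monotone (ψ : ℝ → ℝ)
    (hconv : ConvexOn ℝ (Set.Ici (0 : ℝ)) ψ)
    (h0 : ψ 0 = 0) (h1 : ψ 1 = 0) (ε : ℝ) (hε : 0 < ε) :
    MonotoneOn (fun q : ℝ => ψ (q * (1 + ε)) - (1 + ε) * ψ q) (Set.Ioi (0 : ℝ)) := by
  intro a ha b hb hab
  simp only
  rcases eq_or_lt_of_le hab with rfl | hlt
  · exact le_refl _
  set c : ℝ := 1 + ε with hc
  have hc1 : 1 < c := by simp [hc]; linarith
  have ha0 : (0:ℝ) < a := ha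
  have hb0 : (0:ℝ) < b := hb
  have hac : a < a * c := by nlinarith
  have hbc : b < b * c := by nlinarith
  have habc : a * c < b * c := by nlinarith
  have ha' : a ∈ Set.Ici (0:ℝ) := le_of_lt ha0
  have hb' : b ∈ Set.Ici (0:ℝ) := le_of_lt hb0
  have hac' : a * c ∈ Set.Ici (0:ℝ) := Set.mem_Ici.mpr (by positivity)
  have hbc' : b * c ∈ Set.Ici (0:ℝ) := Set.mem_Ici.mpr (by positivity)
  -- slope(a,b) ≤ slope(a, b*c)
  have s1 : (ψ b - ψ a) / (b - a) ≤ (ψ (b*c) - ψ a) / (b*c - a) :=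
    hconv.secant_mono ha' hb' hbc' (ne_of_gt hlt) (ne_of_gt (lt_trans hlt hbc))
      (le_of_lt hbc)
  -- slope(a, b*c) ≤ slope(a*c, b*c)
  have s2 : (ψ a - ψ (b*c)) / (a - b*c) ≤ (ψ (a*c) - ψ (b*c)) / (a*c - b*c) :=
    hconv.secant_mono hbc' ha' hac' (ne_of_lt (lt_trans hlt hbc)) (ne_of_lt habc)
      (le_of_lt hac)
  have e1 : (ψ a - ψ (b*c)) / (a - b*c) = (ψ (b*c) - ψ a) / (b*c - a) := by
    rw [div_eq_div_iff (by linarith) (by linarith)]; ring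
  have e2 : (ψ (a*c) - ψ (b*c)) / (a*c - b*c) = (ψ (b*c) - ψ (a*c)) / (b*c - a*c) := by
    rw [div_eq_div_iff (by linarith) (by linarith)]; ring
  rw [e1, e2] at s2
  have s3 : (ψ b - ψ a) / (b - a) ≤ (ψ (b*c) - ψ (a*c)) / (b*c - a*c) := le_trans s1 s2
  rw [div_le_div_iff₀ (by linarith) (by linarith)] at s3
  have hc0 : (0:ℝ) < c := by linarith
  nlinarith [s3]
end

section
/- Let ψ be convex with ψ(0)=ψ(1)=0 and define ψ^{(q)}(r) = ψ(qr) − rψ(q). For χ ≥ 0 let Assumption B^{(q)}(χ) be: there exists ε > 0 with ψ(q(1+ε)) < +∞ and ψ^{(q)}(1+ε) < ε(1+χ). Then for 0 < q₁ < q₂ and any χ ≥ 0, B^{(q₂)}(χ) implies B^{(q₁)}(χ); and for q > 0 and 0 < χ₁ < χ₂, B^{(q)}(0) implies B^{(q)}(χ₁), which implies B^{(q)}(χ₂). -/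
/-!
For a convex `ψ` and `c ≥ 1`, the map `q ↦ ψ (c q) - c ψ q` is nondecreasing: its increment
over `[q₁, q₂]` is `c (q₂ - q₁)` times the difference of the secant slopes of `ψ` over
`[c q₁, c q₂]` and over `[q₁, q₂]`, which is nonnegative because the first interval lies to the
right of the second. Hence the `ε` witnessing `B^{(q₂)}(χ)` also witnesses `B^{(q₁)}(χ)`.
Convexity together with `ψ 0 = ψ 1 = 0` makes `ψ` real-valued on `(0, q₂ (1 + ε)]`, so this
is an argument about a real convex function. Monotonicity in `χ` is immediate since `ε > 0`.
-/

open EReal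

/-- Assumption `B^{(q)}(χ)`: there is `ε > 0` with `ψ (q*(1+ε)) < ∞` and
`ψ^{(q)}(1+ε) = ψ (q*(1+ε)) - (1+ε) ψ(q) < ε (1+χ)`, written additively to avoid
`EReal` subtraction. -/
def AssumptionB (ψ : ℝ → EReal) (q χ : ℝ) : Prop :=
  ∃ ε : ℝ, 0 < ε ∧ ψ (q * (1 + ε)) < ⊤ ∧
    ψ (q * (1 + ε)) < ((ε * (1 + χ) : ℝ) : EReal) + ((1 + ε : ℝ) : EReal) * ψ q

section Slope

variable {𝕜 : Type*} [Field 𝕜] [LinearOrder 𝕜] [IsStrictOrderedRing 𝕜] {s : Set 𝕜} {f : 𝕜 → 𝕜}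

theorem ConvexOn.slope_le_slope (hf : ConvexOn 𝕜 s f) {a b c d : 𝕜} (ha : a ∈ s) (hb : b ∈ s)
    (hc : c ∈ s) (hd : d ∈ s) (hab : a < b) (hcd : c < d) (hac : a ≤ c) (hbd : b ≤ d) :
    (f b - f a) / (b - a) ≤ (f d - f c) / (d - c) :=
  have had : a < d := hab.trans_le hbd
  calc (f b - f a) / (b - a) ≤ (f d - f a) / (d - a) :=
        hf.secant_mono ha hb hd hab.ne' had.ne' hbd
    _ = (f a - f d) / (a - d) := by rw [← neg_sub (f a), ← neg_sub a, neg_div_neg_eq]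
    _ ≤ (f c - f d) / (c - d) := hf.secant_mono hd ha hc had.ne hcd.ne hac
    _ = (f d - f c) / (d - c) := by rw [← neg_sub (f d), ← neg_sub d, neg_div_neg_eq]

theorem ConvexOn.comp_mul_sub_mul_mono (hf : ConvexOn 𝕜 s f) {c q₁ q₂ : 𝕜} (hc : 1 ≤ c)
    (hq₁ : 0 ≤ q₁) (hq : q₁ ≤ q₂) (h₁ : q₁ ∈ s) (h₂ : q₂ ∈ s) (hc₁ : c * q₁ ∈ s)
    (hc₂ : c * q₂ ∈ s) :
    f (c * q₁) - c * f q₁ ≤ f (c * q₂) - c * f q₂ := by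
  rcases hq.eq_or_lt with rfl | hq
  · exact le_rfl
  have hc₀ : 0 < c := one_pos.trans_le hc
  have hslope := hf.slope_le_slope h₁ h₂ hc₁ hc₂ hq (by gcongr)
    (le_mul_of_one_le_left hq₁ hc) (le_mul_of_one_le_left (hq₁.trans hq.le) hc)
  rw [← mul_sub, ← _root_.div_div, div_le_div_iff_of_pos_right (sub_pos.2 hq),
    le_div_iff₀ hc₀] at hslope
  linarith

end Slope

def ConvexOnNonneg (ψ : ℝ → EReal) : Prop :=
  ∀ x y : ℝ, 0 ≤ x → 0 ≤ y → ∀ t : ℝ, 0 ≤ t → t ≤ 1 →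
    ψ (t * x + (1 - t) * y) ≤ (t : EReal) * ψ x + ((1 - t : ℝ) : EReal) * ψ y

namespace ConvexOnNonneg

variable {ψ : ℝ → EReal}

lemma eq_bot_of_eq_bot (hψ : ConvexOnNonneg ψ) {x y t : ℝ} (hx : 0 ≤ x) (hy : 0 ≤ y)
    (ht₀ : 0 < t) (ht₁ : t ≤ 1) (hψx : ψ x = ⊥) : ψ (t * x + (1 - t) * y) = ⊥ := by
  have h := hψ x y hx hy t ht₀.le ht₁
  rwa [hψx, coe_mul_bot_of_pos ht₀, bot_add, le_bot_iff] at h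

lemma ne_bot (hψ : ConvexOnNonneg ψ) (h1 : ψ 1 ≠ ⊥) {x : ℝ} (hx : 0 < x) : ψ x ≠ ⊥ := by
  intro hψx
  apply h1
  rcases le_or_gt 1 x with h | h
  · have h' := hψ.eq_bot_of_eq_bot hx.le le_rfl (inv_pos.2 hx) (inv_le_one_of_one_le₀ h) hψx
    rwa [mul_zero, add_zero, inv_mul_cancel₀ hx.ne'] at h'
  · have h2x : 0 < 2 - x := by linarith
    have h' := hψ.eq_bot_of_eq_bot hx.le zero_le_two (inv_pos.2 h2x)
      (inv_le_one_of_one_le₀ (by linarith)) hψx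
    convert h' using 2
    field_simp
    ring

lemma ne_top_of_le (hψ : ConvexOnNonneg ψ) (h0 : ψ 0 ≠ ⊤) {x z : ℝ} (hx : 0 ≤ x)
    (hxz : x ≤ z) (hz : ψ z ≠ ⊤) : ψ x ≠ ⊤ := by
  rcases hx.eq_or_lt with rfl | hx
  · exact h0
  have hz₀ : 0 < z := hx.trans_le hxz
  have h := hψ z 0 hz₀.le le_rfl (x / z) (by positivity) (div_le_one_of_le₀ hxz hz₀.le)
  rw [div_mul_cancel₀ _ hz₀.ne', mul_zero, add_zero] at h
  have coe_mul_ne_top {t : ℝ} (ht : 0 ≤ t) {a : EReal} (ha : a ≠ ⊤) : (t : EReal) * a ≠ ⊤ :=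
    (mul_ne_top _ _).2
      ⟨.inl (coe_ne_bot t), .inl (EReal.coe_nonneg.2 ht), .inl (coe_ne_top t), .inr ha⟩
  refine ne_top_of_le_ne_top (add_ne_top (coe_mul_ne_top (by positivity) hz)
    (coe_mul_ne_top ?_ h0)) h
  linarith [div_le_one_of_le₀ hxz hz₀.le]

lemma convexOn_of_coe_eq (hψ : ConvexOnNonneg ψ) {s : Set ℝ} (hs : Convex ℝ s)
    (hs₀ : s ⊆ Set.Ici 0) {f : ℝ → ℝ} (hf : ∀ x ∈ s, ψ x = f x) : ConvexOn ℝ s f := by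
  refine ⟨hs, fun x hx y hy a b ha hb hab => ?_⟩
  obtain rfl : b = 1 - a := by linarith
  have h := hψ x y (hs₀ hx) (hs₀ hy) a ha (by linarith)
  have hxy := hs hx hy ha hb hab
  simp only [smul_eq_mul] at hxy ⊢
  rw [hf _ hxy, hf x hx, hf y hy] at h
  exact_mod_cast h

end ConvexOnNonneg

lemma AssumptionB.mono_right {ψ : ℝ → EReal} {q χ₁ χ₂ : ℝ} (h : AssumptionB ψ q χ₁)
    (hχ : χ₁ ≤ χ₂) : AssumptionB ψ q χ₂ := by
  obtain ⟨ε, hε, hfin, hlt⟩ := h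
  refine ⟨ε, hε, hfin, hlt.trans_le (add_le_add_left (EReal.coe_le_coe_iff.2 ?_) _)⟩
  gcongr

lemma AssumptionB.of_le_left {ψ : ℝ → EReal} (hψ : ConvexOnNonneg ψ) (h0 : ψ 0 ≠ ⊤)
    (h1 : ψ 1 ≠ ⊥) {q₁ q₂ χ : ℝ} (hq₁ : 0 < q₁) (hq : q₁ ≤ q₂) (h : AssumptionB ψ q₂ χ) :
    AssumptionB ψ q₁ χ := by
  obtain ⟨ε, hε, hfin, hlt⟩ := h
  rw [mul_comm q₂] at hfin hlt
  refine ⟨ε, hε, ?_⟩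
  rw [mul_comm q₁]
  set I := Set.Icc q₁ ((1 + ε) * q₂)
  have h₁ : q₁ ∈ I := ⟨le_rfl, by nlinarith⟩
  have h₂ : q₂ ∈ I := ⟨hq, by nlinarith⟩
  have hc₁ : (1 + ε) * q₁ ∈ I := ⟨by nlinarith, by nlinarith⟩
  have hc₂ : (1 + ε) * q₂ ∈ I := ⟨by nlinarith, le_rfl⟩
  have hreal : ∀ x ∈ I, ψ x = (ψ x).toReal := fun x hx =>
    (coe_toReal (hψ.ne_top_of_le h0 (hq₁.le.trans hx.1) hx.2 hfin.ne)
      (hψ.ne_bot h1 (hq₁.trans_le hx.1))).symm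
  have hconvex := hψ.convexOn_of_coe_eq (convex_Icc _ _) (fun x hx => hq₁.le.trans hx.1) hreal
  have key := hconvex.comp_mul_sub_mul_mono (by linarith) hq₁.le hq h₁ h₂ hc₁ hc₂
  refine ⟨hreal _ hc₁ ▸ coe_lt_top _, ?_⟩
  rw [hreal _ hc₂, hreal _ h₂] at hlt
  rw [hreal _ hc₁, hreal _ h₁]
  norm_cast at hlt ⊢
  linarith

/-- Monotonicity of Assumption `B^{(q)}(χ)`: for `0 < q₁ < q₂` and `χ ≥ 0`,
`B^{(q₂)}(χ)` implies `B^{(q₁)}(χ)`; and for `q > 0` and `0 < χ₁ < χ₂`, `B^{(q)}(0)`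
implies `B^{(q)}(χ₁)`, which implies `B^{(q)}(χ₂)`. -/
theorem assumptionB_monotone (ψ : ℝ → EReal)
    (hconv : ∀ x y : ℝ, 0 ≤ x → 0 ≤ y → ∀ t : ℝ, 0 ≤ t → t ≤ 1 →
      ψ (t * x + (1 - t) * y) ≤ (t : EReal) * ψ x + ((1 - t : ℝ) : EReal) * ψ y)
    (h0 : ψ 0 = 0) (h1 : ψ 1 = 0) :
    (∀ q₁ q₂ χ : ℝ, 0 < q₁ → q₁ < q₂ → 0 ≤ χ →
        AssumptionB ψ q₂ χ → AssumptionB ψ q₁ χ) ∧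
      (∀ q χ₁ χ₂ : ℝ, 0 < q → 0 < χ₁ → χ₁ < χ₂ →
        (AssumptionB ψ q 0 → AssumptionB ψ q χ₁) ∧
          (AssumptionB ψ q χ₁ → AssumptionB ψ q χ₂)) :=
  ⟨fun _ _ _ hq₁ hq _ h => h.of_le_left hconv (by simp [h0]) (by simp [h1]) hq₁ hq.le,
    fun _ _ _ _ hχ₁ hχ => ⟨fun h => h.mono_right hχ₁.le, fun h => h.mono_right hχ.le⟩⟩
end

section
/- Let ψ be convex with ψ(0)=ψ(1)=0 and suppose that for q > 1, Assumptions A₁ and B^{(q)}(0) hold (i.e. ∃ ε₁ > 0 with ψ(1+ε₁) < ε₁, and ∃ ε₂ > 0 with ψ(q(1+ε₂)) finite and ψ(q(1+ε₂)) − (1+ε₂)ψ(q) < ε₂). Then Assumption A_q also holds, i.e. there exists ε > 0 with ψ(q(1+ε)) < q(1+ε) − 1. -/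
open EReal

/-!
Put `x = q (1 + ε)` with `ε` from `B^{(q)}(0)`. Convexity on the chord from `(1, 0)` to `(x, ψ x)`
gives `ψ q ≤ (q - 1) / (x - 1) · ψ x`, and since `(1 + ε)(q - 1) / (x - 1) = 1 - ε / (x - 1)`,
`B^{(q)}(0)` becomes `ψ x < ε + (1 - ε / (x - 1)) ψ x`. As `ψ x < ∞`, this rearranges to
`ψ x < x - 1`, which is `A_q` with the same `ε`.
-/

theorem EReal.lt_div_one_sub_of_lt_add_mul_self {a : EReal} (ha : a ≠ ⊤) {ε c : ℝ} (hc : c < 1)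
    (h : a < (ε : EReal) + (c : EReal) * a) : a < ((ε / (1 - c) : ℝ) : EReal) := by
  induction a using EReal.rec with
  | bot => exact bot_lt_coe _
  | top => exact absurd rfl ha
  | coe b =>
    rw [← coe_mul, ← coe_add, EReal.coe_lt_coe_iff] at h
    rw [EReal.coe_lt_coe_iff, lt_div_iff₀ (by linarith)]
    linarith

theorem le_chord_of_convex_of_map_one_eq_zero (ψ : ℝ → EReal)
    (hconv : ∀ x y : ℝ, 0 ≤ x → 0 ≤ y → ∀ t : ℝ, 0 ≤ t → t ≤ 1 →
      ψ (t * x + (1 - t) * y) ≤ (t : EReal) * ψ x + ((1 - t : ℝ) : EReal) * ψ y)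
    (h1 : ψ 1 = 0) {q x : ℝ} (hq : 1 ≤ q) (hqx : q ≤ x) (hx : 1 < x) :
    ψ q ≤ (((q - 1) / (x - 1) : ℝ) : EReal) * ψ x := by
  have hx1 : 0 < x - 1 := sub_pos.2 hx
  have hcomb : (q - 1) / (x - 1) * x + (1 - (q - 1) / (x - 1)) * 1 = q := by
    field_simp
    ring
  have h := hconv x 1 (by linarith) zero_le_one ((q - 1) / (x - 1))
    (div_nonneg (by linarith) hx1.le) ((div_le_one hx1).2 (by linarith))
  rwa [hcomb, h1, mul_zero, add_zero] at h

theorem assumptionA_of_assumptionA_one_and_B_general (ψ : ℝ → EReal)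
    (hconv : ∀ x y : ℝ, 0 ≤ x → 0 ≤ y → ∀ t : ℝ, 0 ≤ t → t ≤ 1 →
      ψ (t * x + (1 - t) * y) ≤ (t : EReal) * ψ x + ((1 - t : ℝ) : EReal) * ψ y)
    (h1 : ψ 1 = 0) (q : ℝ) (hq : 1 < q)
    (hB : ∃ ε₂ : ℝ, 0 < ε₂ ∧ ψ (q * (1 + ε₂)) < ⊤ ∧
        ψ (q * (1 + ε₂)) < ((ε₂ : ℝ) : EReal) + ((1 + ε₂ : ℝ) : EReal) * ψ q) :
    ∃ ε : ℝ, 0 < ε ∧ ψ (q * (1 + ε)) < ((q * (1 + ε) - 1 : ℝ) : EReal) := by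
  obtain ⟨ε, hε, htop, hlt⟩ := hB
  refine ⟨ε, hε, ?_⟩
  set x := q * (1 + ε)
  have hqx : q < x := by nlinarith
  have hx1 : 0 < x - 1 := by linarith
  have hchord := le_chord_of_convex_of_map_one_eq_zero ψ hconv h1 hq.le hqx.le (by linarith)
  have hc : (1 + ε) * ((q - 1) / (x - 1)) = 1 - ε / (x - 1) := by
    field_simp
    ring
  have hself : ψ x < (ε : EReal) + (((1 + ε) * ((q - 1) / (x - 1)) : ℝ) : EReal) * ψ x := by
    refine hlt.trans_le (add_le_add_right ?_ _)
    rw [coe_mul, mul_assoc]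
    exact mul_le_mul_of_nonneg_left hchord (EReal.coe_nonneg.2 (by linarith))
  rw [hc] at hself
  have hbound := EReal.lt_div_one_sub_of_lt_add_mul_self htop.ne
    (sub_lt_self 1 (div_pos hε hx1)) hself
  rwa [sub_sub_cancel, div_div_cancel₀ hε.ne'] at hbound

/-- For `q > 1`, if `ψ` is convex with `ψ 0 = ψ 1 = 0` and Assumptions `A₁`
(`∃ ε₁ > 0, ψ(1+ε₁) < ε₁`) and `B^{(q)}(0)`
(`∃ ε₂ > 0, ψ(q(1+ε₂)) < ∞ ∧ ψ(q(1+ε₂)) - (1+ε₂)ψ(q) < ε₂`) hold, then Assumption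
`A_q` holds: there is `ε > 0` with `ψ(q(1+ε)) < q(1+ε) - 1`. -/
theorem assumptionA_of_assumptionA_one_and_B (ψ : ℝ → EReal)
    (hconv : ∀ x y : ℝ, 0 ≤ x → 0 ≤ y → ∀ t : ℝ, 0 ≤ t → t ≤ 1 →
      ψ (t * x + (1 - t) * y) ≤ (t : EReal) * ψ x + ((1 - t : ℝ) : EReal) * ψ y)
    (h0 : ψ 0 = 0) (h1 : ψ 1 = 0) (q : ℝ) (hq : 1 < q)
    (hA1 : ∃ ε₁ : ℝ, 0 < ε₁ ∧ ψ (1 + ε₁) < ((ε₁ : ℝ) : EReal))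
    (hB : ∃ ε₂ : ℝ, 0 < ε₂ ∧ ψ (q * (1 + ε₂)) < ⊤ ∧
        ψ (q * (1 + ε₂)) < ((ε₂ : ℝ) : EReal) + ((1 + ε₂ : ℝ) : EReal) * ψ q) :
    ∃ ε : ℝ, 0 < ε ∧ ψ (q * (1 + ε)) < ((q * (1 + ε) - 1 : ℝ) : EReal) :=
  assumptionA_of_assumptionA_one_and_B_general ψ hconv h1 q hq hB
end
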